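/- If Λ = exp(L) with L = u ∧^g w ∈ so(g), then S := exp(σ(L)) preserves the extended metric: ĝ(Sψ, Sφ) = ĝ(ψ, φ) for all ψ, φ ∈ Cl(V,g). -/

import Mathlib

/-!
`σ(u ∧^g w)` is left multiplication by `b = ¼(e_u e_w - e_w e_u)`, and `b† = -b`. Since
`(xψ)† = ψ† x†`, left multiplication by `x` has `ĝ`-adjoint left multiplication by `x†`, so
`σ(u ∧^g w)` is skew-adjoint for the bilinear form `ĝ`. The exponential of a skew-adjoint
endomorphism is orthogonal: in a basis, `Aᵀ J = -J A` gives `exp(A)ᵀ J exp(A) = J`.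
-/

open CliffordAlgebra

noncomputable section

variable {V : Type} [AddCommGroup V] [Module ℝ V]

/-- Clifford conjugation `†`: the linear extension of
`(e_{α₁}⋯e_{α_k})† = (-1)^k e_{α_k}⋯e_{α₁}`, i.e. reversal composed with
the grade involution. -/
def cliffConj (Q : QuadraticForm ℝ V) : CliffordAlgebra Q →ₗ[ℝ] CliffordAlgebra Q :=
  reverse (R := ℝ) ∘ₗ involute.toLinearMap

/-- The scalar (`e_∅`) component `⟨ψ⟩_∅` of a Clifford algebra element, i.e. the
coefficient of `1` in the canonical basis expansion.  Since left multiplication by a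
basis element `e_I` with `I ≠ ∅` is traceless, this equals the normalized trace of
left multiplication by `ψ`. -/
def scalarPart (Q : QuadraticForm ℝ V) (ψ : CliffordAlgebra Q) : ℝ :=
  LinearMap.trace ℝ (CliffordAlgebra Q) (LinearMap.mulLeft ℝ ψ) /
    Module.finrank ℝ (CliffordAlgebra Q)

/-- The extended metric `ĝ(ψ,φ) = -½⟨ψ†φ + φ†ψ⟩_∅`. -/
def gHat (Q : QuadraticForm ℝ V) (ψ φ : CliffordAlgebra Q) : ℝ :=
  -(1/2) * scalarPart Q (cliffConj Q ψ * φ + cliffConj Q φ * ψ)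

/-- `γ_v`: left Clifford multiplication by the vector `v`. -/
def gammaL (Q : QuadraticForm ℝ V) (v : V) : Module.End ℝ (CliffordAlgebra Q) :=
  LinearMap.mulLeft ℝ (ι Q v)

/-- The symmetric bilinear form `g` obtained from `Q` by polarization:
`g(u,v) = ½(Q(u+v) - Q u - Q v)`, so that `e_α e_β + e_β e_α = 2 g_{αβ}`. -/
def gForm (Q : QuadraticForm ℝ V) (u v : V) : ℝ := QuadraticMap.polar Q u v / 2

/-- The spin representation on elementary elements:
`σ(u ∧^g v) := ¼(γ_u γ_v - γ_v γ_u)`. -/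
def sigmaSpin (Q : QuadraticForm ℝ V) (u v : V) : Module.End ℝ (CliffordAlgebra Q) :=
  (1/4 : ℝ) • (gammaL Q u * gammaL Q v - gammaL Q v * gammaL Q u)

/-- The polarization bilinear form `g` of `Q`, with `g(u,v) = ½ polar Q u v`. -/
def gBilin (Q : QuadraticForm ℝ V) : LinearMap.BilinForm ℝ V :=
  (1/2 : ℝ) • QuadraticMap.polarBilin Q

/-- The elementary skew-adjoint endomorphism `u ∧^g v : w ↦ g(v,w) u - g(u,w) v`. -/
def wedgeG (g : LinearMap.BilinForm ℝ V) (u v : V) : Module.End ℝ V :=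
  (g v).smulRight u - (g u).smulRight v

/-- The exponential of an endomorphism of a finite-dimensional real vector space,
computed through the matrix exponential in an arbitrary basis (the result is
basis-independent). -/
def endExp {W : Type} [AddCommGroup W] [Module ℝ W] [FiniteDimensional ℝ W]
    (f : Module.End ℝ W) : Module.End ℝ W :=
  (LinearMap.toMatrix (Module.finBasis ℝ W) (Module.finBasis ℝ W)).symm
    (NormedSpace.exp (LinearMap.toMatrix (Module.finBasis ℝ W) (Module.finBasis ℝ W) f))

section EndExp

open NormedSpace Matrix
open scoped Norms.Operator

variable {W : Type} [AddCommGroup W] [Module ℝ W] [FiniteDimensional ℝ W]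

theorem toMatrix_endExp (f : Module.End ℝ W) :
    LinearMap.toMatrix (Module.finBasis ℝ W) (Module.finBasis ℝ W) (endExp f) =
      exp (LinearMap.toMatrix (Module.finBasis ℝ W) (Module.finBasis ℝ W) f) :=
  (LinearMap.toMatrix _ _).apply_symm_apply _

theorem LinearMap.IsSkewAdjoint.isOrthogonal_endExp {B : LinearMap.BilinForm ℝ W}
    {f : Module.End ℝ W} (hf : B.IsSkewAdjoint f) : B.IsOrthogonal (endExp f) := by
  set b := Module.finBasis ℝ W
  set A := LinearMap.toMatrix b b f
  set J := LinearMap.toMatrix₂ b b B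
  have hskew : Aᵀ * J = J * -A := by
    have := congrArg (LinearMap.toMatrix₂ b b)
      ((LinearMap.isAdjointPair_iff_comp_eq_compl₂ (g := -f)).mp hf)
    rwa [LinearMap.toMatrix₂_comp b b, LinearMap.toMatrix₂_compl₂ b b, map_neg] at this
  have hsemiconj : SemiconjBy J A (-Aᵀ) := by
    rw [SemiconjBy, neg_mul, hskew, mul_neg, neg_neg]
  have hJ : (exp A)ᵀ * J * exp A = J := by
    have := hsemiconj.exp_neg_mul_mul_exp_eq_self
    rw [neg_neg] at this
    rw [← Matrix.exp_transpose]
    exact this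
  have hform : B.compl₁₂ (endExp f) (endExp f) = B := by
    apply (LinearMap.toMatrix₂ b b).injective
    rw [LinearMap.toMatrix₂_compl₁₂ b b, toMatrix_endExp, hJ]
  exact fun x y ↦ LinearMap.congr_fun₂ hform x y

end EndExp

section Clifford

variable (Q : QuadraticForm ℝ V)

theorem cliffConj_mul (x y : CliffordAlgebra Q) :
    cliffConj Q (x * y) = cliffConj Q y * cliffConj Q x := by
  simp [cliffConj, reverse.map_mul]

theorem cliffConj_cliffConj (x : CliffordAlgebra Q) : cliffConj Q (cliffConj Q x) = x := by
  simp only [cliffConj, LinearMap.comp_apply, AlgHom.toLinearMap_apply]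
  rw [← reverse_involute, involute_involute, reverse_reverse]

theorem cliffConj_ι (v : V) : cliffConj Q (ι Q v) = -ι Q v := by
  simp [cliffConj]

theorem cliffConj_ι_mul_ι (u w : V) : cliffConj Q (ι Q u * ι Q w) = ι Q w * ι Q u := by
  rw [cliffConj_mul, cliffConj_ι, cliffConj_ι, neg_mul_neg]

theorem gHat_mul_left (x ψ φ : CliffordAlgebra Q) :
    gHat Q (x * ψ) φ = gHat Q ψ (cliffConj Q x * φ) := by
  simp only [gHat, cliffConj_mul, cliffConj_cliffConj, mul_assoc]

def scalarPartLinear : CliffordAlgebra Q →ₗ[ℝ] ℝ :=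
  (Module.finrank ℝ (CliffordAlgebra Q) : ℝ)⁻¹ •
    (LinearMap.trace ℝ (CliffordAlgebra Q) ∘ₗ LinearMap.mul ℝ (CliffordAlgebra Q))

theorem scalarPartLinear_apply (x : CliffordAlgebra Q) :
    scalarPartLinear Q x = scalarPart Q x := by
  simp only [scalarPartLinear, scalarPart, LinearMap.smul_apply, LinearMap.comp_apply, smul_eq_mul,
    div_eq_inv_mul]
  rfl

def gHatBilin : LinearMap.BilinForm ℝ (CliffordAlgebra Q) :=
  let P := (LinearMap.mul ℝ (CliffordAlgebra Q) ∘ₗ cliffConj Q).compr₂ (scalarPartLinear Q)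
  (-(1 / 2) : ℝ) • (P + P.flip)

theorem gHatBilin_apply (ψ φ : CliffordAlgebra Q) : gHatBilin Q ψ φ = gHat Q ψ φ := by
  simp only [gHatBilin, gHat, ← scalarPartLinear_apply, LinearMap.smul_apply, LinearMap.add_apply,
    LinearMap.flip_apply, LinearMap.compr₂_apply, LinearMap.comp_apply, LinearMap.mul_apply',
    map_add, smul_eq_mul]

theorem isSkewAdjoint_mulLeft_of_cliffConj_eq_neg {b : CliffordAlgebra Q}
    (hb : cliffConj Q b = -b) : (gHatBilin Q).IsSkewAdjoint (LinearMap.mulLeft ℝ b) := by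
  intro ψ φ
  simp only [gHatBilin_apply, LinearMap.mulLeft_apply, Pi.neg_apply, gHat_mul_left, hb,
    neg_mul]

def spinBivector (u w : V) : CliffordAlgebra Q :=
  (1 / 4 : ℝ) • (ι Q u * ι Q w - ι Q w * ι Q u)

theorem sigmaSpin_eq_mulLeft (u w : V) :
    sigmaSpin Q u w = LinearMap.mulLeft ℝ (spinBivector Q u w) := by
  ext x
  simp [sigmaSpin, gammaL, spinBivector, sub_mul, mul_assoc]

theorem cliffConj_spinBivector (u w : V) :
    cliffConj Q (spinBivector Q u w) = -spinBivector Q u w := by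
  rw [spinBivector, map_smul, map_sub, cliffConj_ι_mul_ι, cliffConj_ι_mul_ι, ← smul_neg, neg_sub]

end Clifford

theorem exp_sigma_preserves_gHat_general (Q : QuadraticForm ℝ V)
    [FiniteDimensional ℝ (CliffordAlgebra Q)] (u w : V)
    (S : Module.End ℝ (CliffordAlgebra Q)) (hS : S = endExp (sigmaSpin Q u w))
    (ψ φ : CliffordAlgebra Q) :
    gHat Q (S ψ) (S φ) = gHat Q ψ φ := by
  have hskew := isSkewAdjoint_mulLeft_of_cliffConj_eq_neg Q (cliffConj_spinBivector Q u w)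
  rw [hS, sigmaSpin_eq_mulLeft, ← gHatBilin_apply, ← gHatBilin_apply]
  exact hskew.isOrthogonal_endExp ψ φ

/-- if `L = u ∧^g w ∈ so(g)`, then `S = exp(σ(L))` preserves the
extended metric: `ĝ(Sψ, Sφ) = ĝ(ψ, φ)`. -/
theorem exp_sigma_preserves_gHat (Q : QuadraticForm ℝ V) [FiniteDimensional ℝ V]
    [FiniteDimensional ℝ (CliffordAlgebra Q)] (u w : V)
    (S : Module.End ℝ (CliffordAlgebra Q)) (hS : S = endExp (sigmaSpin Q u w))
    (ψ φ : CliffordAlgebra Q) :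
    gHat Q (S ψ) (S φ) = gHat Q ψ φ :=
  exp_sigma_preserves_gHat_general Q u w S hS ψ φ
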